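/- arXiv:2007.07949 — 6 statements merged into one kernel-verified Lean document; each statement's English description precedes it below -/
import Mathlib

section
/- If x_n = (4/3)^{n-1} and x_j >= (3/4) x_{j+1} + (1/2)(4/3)^{j-1} for 1 <= j <= n-1, then x_1 >= (n+1)/2. -/
/-- If `x_n = (4/3)^{n-1}` and `x_j ≥ (3/4) x_{j+1} + (1/2)(4/3)^{j-1}` for
`1 ≤ j ≤ n-1`, then `x_1 ≥ (n+1)/2`. -/
theorem recurrence_inequality (n : ℕ) (hn : 1 ≤ n) (x : ℕ → ℝ)
    (hxn : x n = (4 / 3) ^ (n - 1))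
    (hrec : ∀ j, 1 ≤ j → j ≤ n - 1 →
      (3 / 4) * x (j + 1) + (1 / 2) * (4 / 3) ^ (j - 1) ≤ x j) :
    ((n : ℝ) + 1) / 2 ≤ x 1 := by
  have key : ∀ d, d < n → ((d : ℝ) + 2) / 2 * (4 / 3) ^ (n - d - 1) ≤ x (n - d) := by
    intro d
    induction d with
    | zero => intro _; simp [hxn]
    | succ d ih =>
      intro hd
      have hd' : d < n := Nat.lt_of_succ_lt hd
      have ih' := ih hd'
      have hj1 : 1 ≤ n - (d + 1) := by omega
      have hj2 : n - (d + 1) ≤ n - 1 := by omega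
      have hrec' := hrec _ hj1 hj2
      have hjsucc : n - (d + 1) + 1 = n - d := by omega
      rw [hjsucc] at hrec'
      have hpow : (4 / 3 : ℝ) ^ (n - d - 1) = (4 / 3) * (4 / 3) ^ (n - (d + 1) - 1) := by
        rw [← pow_succ']
        congr 1
        omega
      push_cast
      calc ((d : ℝ) + 1 + 2) / 2 * (4 / 3) ^ (n - (d + 1) - 1)
          = (3 / 4) * (((d : ℝ) + 2) / 2 * (4 / 3) ^ (n - d - 1))
              + (1 / 2) * (4 / 3) ^ (n - (d + 1) - 1) := by
            rw [hpow]; ring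
        _ ≤ (3 / 4) * x (n - d) + (1 / 2) * (4 / 3) ^ (n - (d + 1) - 1) := by gcongr
        _ ≤ x (n - (d + 1)) := hrec'
  have h := key (n - 1) (by omega)
  have h1 : n - (n - 1) = 1 := by omega
  rw [h1] at h
  norm_num at h
  have hc : ((n - 1 : ℕ) : ℝ) = (n : ℝ) - 1 := by
    push_cast [hn]; ring
  rw [hc] at h
  simpa using by linarith
end

section
/- Let H_1, ..., H_n be real-valued functions on a finite set such that for each 2 <= j <= n, the ell_1 norm of the restriction of H_j to the support of H_{j-1} equals (1/8)||H_j||_1, and supp(H_{j-1}) is contained in supp(H_j). Then for all scalars a_1, ..., a_n, ||sum_{j=1}^n a_j H_j||_1 >= (3/4) sum_{j=1}^n |a_j| ||H_j||_1. -/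
open Finset

/-- Auxiliary: in a support chain, every earlier support is contained in the last. -/
lemma chain_supp_aux {α : Type*} (n : ℕ) (H : ℕ → α → ℝ)
    (hsupp : ∀ j, 2 ≤ j → j ≤ n →
      Function.support (H (j - 1)) ⊆ Function.support (H j)) :
    ∀ j, 1 ≤ j → j ≤ n → Function.support (H j) ⊆ Function.support (H n) := by
  induction n with
  | zero => intro j h1 h0; omega
  | succ m ih =>
    intro j h1 hj
    rcases Nat.lt_or_ge j (m + 1) with h | h
    · have hjm : j ≤ m := by omega
      refine (ih (fun k hk2 hkm => hsupp k hk2 (by omega)) j h1 hjm).trans ?_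
      have := hsupp (m + 1) (by omega) le_rfl
      simpa using this
    · have : j = m + 1 := by omega
      subst this; exact subset_rfl

/-- Let `H_1, ..., H_n` be real-valued functions on a finite set such that for each
`2 ≤ j ≤ n` the support of `H_{j-1}` is contained in the support of `H_j` and the
`ℓ₁`-norm of the restriction of `H_j` to the support of `H_{j-1}` equals
`(1/8)‖H_j‖₁`. Then `‖∑ a_j H_j‖₁ ≥ (3/4) ∑ |a_j| ‖H_j‖₁` for all scalars `a_j`. -/
theorem chain_lower_bound {α : Type*} [Fintype α] [DecidableEq α] (n : ℕ)
    (H : ℕ → α → ℝ)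
    (hsupp : ∀ j, 2 ≤ j → j ≤ n →
      Function.support (H (j - 1)) ⊆ Function.support (H j))
    (hmass : ∀ j, 2 ≤ j → j ≤ n →
      ∑ x ∈ Finset.univ.filter (fun x => H (j - 1) x ≠ 0), |H j x|
        = (1 / 8) * ∑ x : α, |H j x|) :
    ∀ a : ℕ → ℝ,
      (3 / 4) * ∑ j ∈ Finset.Icc 1 n, |a j| * ∑ x : α, |H j x|
        ≤ ∑ x : α, |∑ j ∈ Finset.Icc 1 n, a j * H j x| := by
  induction n with
  | zero => intro a; simp
  | succ n ih =>
    intro a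
    rcases Nat.eq_zero_or_pos n with rfl | hn
    · -- n = 1 : single term
      simp only [Finset.Icc_self, Finset.sum_singleton]
      have habs : ∀ x : α, |a 1 * H 1 x| = |a 1| * |H 1 x| := fun x => abs_mul _ _
      rw [Finset.sum_congr rfl (fun x _ => habs x), ← Finset.mul_sum]
      have hnn : 0 ≤ |a 1| * ∑ x : α, |H 1 x| :=
        mul_nonneg (abs_nonneg _) (Finset.sum_nonneg fun x _ => abs_nonneg _)
      nlinarith
    · -- n ≥ 1
      have hIH := ih (fun j h2 hj => hsupp j h2 (by omega))
        (fun j h2 hj => hmass j h2 (by omega)) a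
      set G : α → ℝ := fun x => ∑ j ∈ Finset.Icc 1 n, a j * H j x with hG
      set M : ℝ := ∑ x : α, |H (n + 1) x| with hM
      set A : ℝ := |a (n + 1)| with hA
      have hAnn : 0 ≤ A := abs_nonneg _
      have hMnn : 0 ≤ M := Finset.sum_nonneg fun x _ => abs_nonneg _
      -- the mass identity for j = n+1
      have hmass' : ∑ x ∈ Finset.univ.filter (fun x => H n x ≠ 0), |H (n + 1) x|
          = (1 / 8) * M := by
        have := hmass (n + 1) (by omega) le_rfl
        simpa using this
      -- G vanishes off the support of H n
      have hGzero : ∀ x : α, x ∉ Finset.univ.filter (fun x => H n x ≠ 0) → G x = 0 := by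
        intro x hx
        have hxn : H n x = 0 := by
          by_contra hne
          exact hx (Finset.mem_filter.mpr ⟨Finset.mem_univ x, hne⟩)
        refine Finset.sum_eq_zero fun j hj => ?_
        have hjmem := Finset.mem_Icc.mp hj
        have hjn : H j x = 0 := by
          by_contra hne
          have : x ∈ Function.support (H n) :=
            chain_supp_aux n H (fun k hk2 hkn => hsupp k hk2 (by omega)) j
              hjmem.1 hjmem.2 hne
          exact this hxn
        rw [hjn, mul_zero]
      -- split the j-sum
      have hsplit : ∀ x : α, (∑ j ∈ Finset.Icc 1 (n + 1), a j * H j x)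
          = G x + a (n + 1) * H (n + 1) x := fun x =>
        Finset.sum_Icc_succ_top (by omega) _
      -- split the x-sum over S and its complement
      set S : Finset α := Finset.univ.filter (fun x => H n x ≠ 0) with hSdef
      have hxsplit : (∑ x : α, |∑ j ∈ Finset.Icc 1 (n + 1), a j * H j x|)
          = (∑ x ∈ S, |G x + a (n + 1) * H (n + 1) x|)
            + ∑ x ∈ Finset.univ.filter (fun x => ¬ H n x ≠ 0),
                |G x + a (n + 1) * H (n + 1) x| := by
        rw [Finset.sum_congr rfl (fun x _ => by rw [hsplit x])]
        exact (Finset.sum_filter_add_sum_filter_not Finset.univ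
          (fun x => H n x ≠ 0) _).symm
      -- off S : only the top term contributes
      have hoffS : (∑ x ∈ Finset.univ.filter (fun x => ¬ H n x ≠ 0),
            |G x + a (n + 1) * H (n + 1) x|) = (7 / 8) * (A * M) := by
        have h1 : (∑ x ∈ Finset.univ.filter (fun x => ¬ H n x ≠ 0),
              |G x + a (n + 1) * H (n + 1) x|)
            = ∑ x ∈ Finset.univ.filter (fun x => ¬ H n x ≠ 0),
                A * |H (n + 1) x| := by
          refine Finset.sum_congr rfl fun x hx => ?_
          have hx' : x ∉ S := by
            simp only [hSdef, Finset.mem_filter] at hx ⊢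
            tauto
          rw [hGzero x hx', zero_add, abs_mul]
        have h2 : (∑ x ∈ Finset.univ.filter (fun x => ¬ H n x ≠ 0), |H (n + 1) x|)
            = (7 / 8) * M := by
          have := Finset.sum_filter_add_sum_filter_not Finset.univ
            (fun x => H n x ≠ 0) (fun x => |H (n + 1) x|)
          rw [hmass'] at this
          linarith [this]
        rw [h1, ← Finset.mul_sum, h2]; ring
      -- on S : triangle inequality
      have honS : (∑ x ∈ S, |G x|) - (1 / 8) * (A * M)
          ≤ ∑ x ∈ S, |G x + a (n + 1) * H (n + 1) x| := by
        have hpt : ∀ x ∈ S, |G x| - A * |H (n + 1) x|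
            ≤ |G x + a (n + 1) * H (n + 1) x| := by
          intro x _
          have h := abs_add_le (G x + a (n + 1) * H (n + 1) x) (-(a (n + 1) * H (n + 1) x))
          simp only [add_neg_cancel_right, abs_neg, abs_mul] at h
          linarith
        have := Finset.sum_le_sum hpt
        rw [Finset.sum_sub_distrib, ← Finset.mul_sum] at this
        rw [hSdef] at this ⊢
        rw [hmass'] at this
        linarith
      -- |G| has full mass on S
      have hGS : (∑ x ∈ S, |G x|) = ∑ x : α, |G x| := by
        have := Finset.sum_filter_add_sum_filter_not Finset.univ
          (fun x => H n x ≠ 0) (fun x => |G x|)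
        have hz : (∑ x ∈ Finset.univ.filter (fun x => ¬ H n x ≠ 0), |G x|) = 0 := by
          refine Finset.sum_eq_zero fun x hx => ?_
          have hx' : x ∉ S := by
            simp only [hSdef, Finset.mem_filter] at hx ⊢
            tauto
          rw [hGzero x hx', abs_zero]
        rw [hz, add_zero] at this
        exact this
      -- split the RHS goal's j-sum
      have hrhs : (∑ j ∈ Finset.Icc 1 (n + 1), |a j| * ∑ x : α, |H j x|)
          = (∑ j ∈ Finset.Icc 1 n, |a j| * ∑ x : α, |H j x|) + A * M :=
        Finset.sum_Icc_succ_top (by omega) _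
      rw [hrhs, hxsplit, hoffS]
      rw [hGS] at honS
      nlinarith [hIH, honS]
end

section
/- For n >= 1: (2k-2)/(2k-1) * n + (4k^2-6k+3)/(2k-1)^2 + (2k-2)/((2k-1)^2 (2k)^n) equals ||h_0 + (1/2) sum_{i=1}^n (2k)^i h_{i,1}||_{L_1[0,1]}, where h_0 = 1_{[0,1]} and h_{i,1} = (2k)^{-i}(e_{i,1} - e_{i,2}) with e_{i,j} = (2k)^i 1_{((j-1)(2k)^{-i}, j(2k)^{-i}]}. -/
/-! Write `f_n` for the function inside the norm, with `K = 2k`. Passing from `f_m` to `f_{m+1}`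
only changes it on `(0, 2K^{-(m+1)}]`, where `f_m` is the constant `c_m = 1 + ½∑_{i ≤ m} K^i`;
there `f_{m+1} = c_m ± K^{m+1}/2`, and since `2c_m ≤ K^{m+1}` the norm grows by exactly
`1 - 2c_m K^{-(m+1)}`. Summing these increments, with the geometric sum for `c_m`, gives the
formula. -/

open Finset intervalIntegral MeasureTheory Set

/-- `h_0 + ½∑_{i=1}^n K^i h_{i,1}`, with the base `2k` generalized to a real `K`. -/
noncomputable def projectedEdge (K : ℝ) (n : ℕ) (t : ℝ) : ℝ :=
  1 + (1 / 2) * ∑ i ∈ Finset.Icc 1 n, K ^ i *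
    ((Ioc 0 (K ^ i)⁻¹).indicator 1 t - (Ioc (K ^ i)⁻¹ (2 * (K ^ i)⁻¹)).indicator 1 t)

noncomputable def edgePlateau (K : ℝ) (n : ℕ) : ℝ :=
  1 + (1 / 2) * ∑ i ∈ Finset.Icc 1 n, K ^ i

section
variable {K : ℝ} {m : ℕ}

lemma projectedEdge_zero (t : ℝ) : projectedEdge K 0 t = 1 := by simp [projectedEdge]

lemma projectedEdge_succ (t : ℝ) :
    projectedEdge K (m + 1) t = projectedEdge K m t + K ^ (m + 1) / 2 *
      ((Ioc 0 (K ^ (m + 1))⁻¹).indicator 1 t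
        - (Ioc (K ^ (m + 1))⁻¹ (2 * (K ^ (m + 1))⁻¹)).indicator 1 t) := by
  rw [projectedEdge, projectedEdge, Finset.sum_Icc_succ_top (by omega)]
  ring

lemma projectedEdge_of_mem_Ioc (hK : 1 ≤ K) {t : ℝ} (ht : t ∈ Ioc 0 (K ^ m)⁻¹) :
    projectedEdge K m t = edgePlateau K m := by
  rw [projectedEdge, edgePlateau]
  congr 2
  refine Finset.sum_congr rfl fun i hi => ?_
  have hle : t ≤ (K ^ i)⁻¹ :=
    ht.2.trans (inv_anti₀ (by positivity) (pow_le_pow_right₀ hK (Finset.mem_Icc.1 hi).2))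
  rw [indicator_of_mem (show t ∈ Ioc 0 (K ^ i)⁻¹ from ⟨ht.1, hle⟩),
    indicator_of_notMem fun h => h.1.not_ge hle]
  simp

lemma sub_one_mul_sum_Icc_pow : (K - 1) * ∑ i ∈ Finset.Icc 1 m, K ^ i = K ^ (m + 1) - K := by
  rw [← Finset.Ico_add_one_right_eq_Icc, mul_comm, geom_sum_Ico_mul _ (by omega), pow_one]

lemma edgePlateau_pos (hK : 0 ≤ K) : 0 < edgePlateau K m := by
  rw [edgePlateau]; positivity

lemma two_mul_edgePlateau_le (hK : 2 ≤ K) : 2 * edgePlateau K m ≤ K ^ (m + 1) := by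
  have hgeom := sub_one_mul_sum_Icc_pow (K := K) (m := m)
  have hP : 1 ≤ K ^ (m + 1) := one_le_pow₀ (by linarith)
  rw [edgePlateau]
  nlinarith [mul_nonneg (sub_nonneg.2 hK) (sub_nonneg.2 hP)]

lemma intervalIntegrable_indicator_Ioc_const (a b c u v : ℝ) :
    IntervalIntegrable ((Ioc a b).indicator fun _ => c) volume u v :=
  ((integrable_indicator_iff measurableSet_Ioc).2
    (integrableOn_const measure_Ioc_lt_top.ne)).intervalIntegrable

lemma intervalIntegrable_projectedEdge (u v : ℝ) :
    ∀ m, IntervalIntegrable (projectedEdge K m) volume u v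
  | 0 => by simp only [funext projectedEdge_zero]; exact intervalIntegrable_const
  | m + 1 => by
    rw [funext projectedEdge_succ]
    exact (intervalIntegrable_projectedEdge u v m).add
      (((intervalIntegrable_indicator_Ioc_const _ _ 1 u v).sub
        (intervalIntegrable_indicator_Ioc_const _ _ 1 u v)).const_mul _)

lemma integral_indicator_Ioc_const {a b u v : ℝ} (hua : u ≤ a) (hab : a ≤ b) (hbv : b ≤ v)
    (c : ℝ) :
    ∫ t in u..v, (Ioc a b).indicator (fun _ => c) t = (b - a) * c := by
  rw [integral_of_le (hua.trans (hab.trans hbv)), setIntegral_indicator measurableSet_Ioc,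
    inter_eq_right.2 (Ioc_subset_Ioc hua hbv), setIntegral_const, Real.volume_real_Ioc_of_le hab,
    smul_eq_mul]

lemma abs_projectedEdge_succ (hK : 2 ≤ K) (t : ℝ) :
    |projectedEdge K (m + 1) t| = |projectedEdge K m t|
      + (Ioc 0 (K ^ (m + 1))⁻¹).indicator (fun _ => K ^ (m + 1) / 2) t
      + (Ioc (K ^ (m + 1))⁻¹ (2 * (K ^ (m + 1))⁻¹)).indicator
          (fun _ => K ^ (m + 1) / 2 - 2 * edgePlateau K m) t := by
  have h2a : 2 * (K ^ (m + 1))⁻¹ ≤ (K ^ m)⁻¹ := by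
    have : K⁻¹ ≤ 2⁻¹ := inv_anti₀ two_pos hK
    rw [pow_succ, mul_inv]
    nlinarith [inv_pos.2 (pow_pos (by linarith : 0 < K) m)]
  have hc := edgePlateau_pos (m := m) (by linarith : 0 ≤ K)
  have hcP := two_mul_edgePlateau_le (m := m) hK
  rw [projectedEdge_succ]
  set a := (K ^ (m + 1))⁻¹
  have ha : 0 < a := by positivity
  by_cases h₁ : t ∈ Ioc 0 a
  · have h₂ : t ∉ Ioc a (2 * a) := fun h => h.1.not_ge h₁.2
    rw [projectedEdge_of_mem_Ioc (by linarith) ⟨h₁.1, h₁.2.trans (by linarith)⟩]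
    simp only [indicator_of_mem h₁, indicator_of_notMem h₂, Pi.one_apply]
    rw [abs_of_pos hc, abs_of_pos (by positivity)]
    ring
  by_cases h₂ : t ∈ Ioc a (2 * a)
  · rw [projectedEdge_of_mem_Ioc (by linarith) ⟨ha.trans h₂.1, h₂.2.trans h2a⟩]
    simp only [indicator_of_mem h₂, indicator_of_notMem h₁, Pi.one_apply]
    rw [abs_of_pos hc, abs_of_nonpos (by linarith)]
    ring
  · simp [indicator_of_notMem h₁, indicator_of_notMem h₂]

lemma integral_abs_projectedEdge_succ (hK : 2 ≤ K) :
    ∫ t in (0 : ℝ)..1, |projectedEdge K (m + 1) t|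
      = (∫ t in (0 : ℝ)..1, |projectedEdge K m t|) + 1
        - 2 * (K ^ (m + 1))⁻¹ * edgePlateau K m := by
  have hP : 2 ≤ K ^ (m + 1) := hK.trans (le_self_pow₀ (by linarith) (by omega))
  have hf : IntervalIntegrable (fun t => |projectedEdge K m t|) volume 0 1 :=
    (intervalIntegrable_projectedEdge 0 1 m).abs
  have hind (a b c : ℝ) := intervalIntegrable_indicator_Ioc_const a b c 0 1
  simp_rw [abs_projectedEdge_succ hK]
  set a := (K ^ (m + 1))⁻¹ with ha_def
  have ha : 0 < a := by positivity
  have h2a : 2 * a ≤ 1 := by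
    rw [ha_def, ← div_eq_mul_inv]
    exact (div_le_one (by positivity)).2 hP
  rw [intervalIntegral.integral_add (hf.add (hind _ _ _)) (hind _ _ _),
    intervalIntegral.integral_add hf (hind _ _ _),
    integral_indicator_Ioc_const le_rfl ha.le (by linarith),
    integral_indicator_Ioc_const ha.le (by linarith) h2a]
  linear_combination inv_mul_cancel₀ (by positivity : K ^ (m + 1) ≠ 0)

lemma integral_abs_projectedEdge (hK : 2 ≤ K) (n : ℕ) :
    ∫ t in (0 : ℝ)..1, |projectedEdge K n t|
      = (K - 2) / (K - 1) * n + (K ^ 2 - 3 * K + 3) / (K - 1) ^ 2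
        + (K - 2) / ((K - 1) ^ 2 * K ^ n) := by
  have hK1 : K - 1 ≠ 0 := by linarith
  induction n with
  | zero =>
    simp only [projectedEdge_zero, abs_one, intervalIntegral.integral_const]
    field_simp
    ring
  | succ m ih =>
    have hsum : ∑ i ∈ Finset.Icc 1 m, K ^ i = (K ^ (m + 1) - K) / (K - 1) := by
      rw [eq_div_iff hK1, mul_comm, sub_one_mul_sum_Icc_pow]
    have hK0 : K ≠ 0 := by linarith
    rw [integral_abs_projectedEdge_succ hK, ih, edgePlateau, hsum]
    push_cast
    field_simp
    ring

end

theorem L1_norm_projected_edge_general (k n : ℕ) (hk : 2 ≤ k)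
    (e : ℕ → ℕ → ℝ → ℝ)
    (he : e = fun (i j : ℕ) (t : ℝ) => (2 * (k : ℝ)) ^ i *
      (if ((j : ℝ) - 1) * ((2 * (k : ℝ)) ^ i)⁻¹ < t ∧ t ≤ (j : ℝ) * ((2 * (k : ℝ)) ^ i)⁻¹
        then 1 else 0))
    (h : ℕ → ℝ → ℝ)
    (hh : h = fun (i : ℕ) (t : ℝ) => ((2 * (k : ℝ)) ^ i)⁻¹ * (e i 1 t - e i 2 t)) :
    ∫ t in (0 : ℝ)..1,
        |1 + (1 / 2) * ∑ i ∈ Finset.Icc 1 n, (2 * (k : ℝ)) ^ i * h i t|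
      = (2 * (k : ℝ) - 2) / (2 * (k : ℝ) - 1) * n
        + (4 * (k : ℝ) ^ 2 - 6 * (k : ℝ) + 3) / (2 * (k : ℝ) - 1) ^ 2
        + (2 * (k : ℝ) - 2) / ((2 * (k : ℝ) - 1) ^ 2 * (2 * (k : ℝ)) ^ n) := by
  subst he hh
  have hK : (2 : ℝ) ≤ 2 * k := by
    have : (2 : ℝ) ≤ k := by exact_mod_cast hk
    linarith
  calc _ = ∫ t in (0 : ℝ)..1, |projectedEdge (2 * k) n t| := by
        congr 1
        funext t
        simp only [projectedEdge, indicator_apply, Set.mem_Ioc, Pi.one_apply]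
        congr 3
        refine Finset.sum_congr rfl fun i _ => ?_
        rw [← mul_sub, inv_mul_cancel_left₀ (by positivity)]
        norm_num
    _ = _ := integral_abs_projectedEdge hK n
    _ = _ := by ring

/-- For `n ≥ 1` and `k ≥ 2`:
`(2k-2)/(2k-1) · n + (4k²-6k+3)/(2k-1)² + (2k-2)/((2k-1)²(2k)^n)` equals the
`L₁[0,1]`-norm of `h_0 + (1/2)∑_{i=1}^n (2k)^i h_{i,1}`, where `h_0 = 1_{[0,1]}` and
`h_{i,1} = (2k)^{-i}(e_{i,1} - e_{i,2})` with
`e_{i,j} = (2k)^i 1_{((j-1)(2k)^{-i}, j(2k)^{-i}]}`. -/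
theorem L1_norm_projected_edge (k n : ℕ) (hk : 2 ≤ k) (hn : 1 ≤ n)
    (e : ℕ → ℕ → ℝ → ℝ)
    (he : e = fun (i j : ℕ) (t : ℝ) => (2 * (k : ℝ)) ^ i *
      (if ((j : ℝ) - 1) * ((2 * (k : ℝ)) ^ i)⁻¹ < t ∧ t ≤ (j : ℝ) * ((2 * (k : ℝ)) ^ i)⁻¹
        then 1 else 0))
    (h : ℕ → ℝ → ℝ)
    (hh : h = fun (i : ℕ) (t : ℝ) => ((2 * (k : ℝ)) ^ i)⁻¹ * (e i 1 t - e i 2 t)) :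
    ∫ t in (0 : ℝ)..1,
        |1 + (1 / 2) * ∑ i ∈ Finset.Icc 1 n, (2 * (k : ℝ)) ^ i * h i t|
      = (2 * (k : ℝ) - 2) / (2 * (k : ℝ) - 1) * n
        + (4 * (k : ℝ) ^ 2 - 6 * (k : ℝ) + 3) / (2 * (k : ℝ) - 1) ^ 2
        + (2 * (k : ℝ) - 2) / ((2 * (k : ℝ) - 1) ^ 2 * (2 * (k : ℝ)) ^ n) :=
  L1_norm_projected_edge_general k n hk e he h hh
end

section
/- Let M be a finite metric space with n points, viewed as a weighted complete graph with edge weights d(u,v). An edge uv is essential if d(u,v) < d(u,w) + d(w,v) for all w distinct from u, v. If the set of essential edges of M has exactly n-1 elements, and the essential edges connect M, then the essential edges form a spanning tree of M and the metric d coincides with the shortest-weighted-path metric of this tree. -/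
/-!
A connected graph on `n` vertices with `n - 1` edges is a tree. For the metric, a non-essential
pair `u v` has a point `w` with `d(u,w) + d(w,v) = d(u,v)` and both summands strictly smaller
than `d(u,v)`, so strong induction on the finitely many distances yields a walk of essential
edges of weight exactly `d(u,v)`; the triangle inequality bounds every walk from below.
-/

/-- The graph of essential edges of a metric space: `u v` are adjacent iff `u ≠ v` and
`d(u,v) < d(u,w) + d(w,v)` for every `w` distinct from `u` and `v`. -/
def essentialGraph (M : Type*) [MetricSpace M] : SimpleGraph M where
  Adj u v := u ≠ v ∧ ∀ w, w ≠ u → w ≠ v → dist u v < dist u w + dist w v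
  symm := by
    constructor
    intro u v h
    obtain ⟨huv, hw⟩ := h
    refine ⟨huv.symm, fun w hwv hwu => ?_⟩
    have h1 := hw w hwu hwv
    rw [dist_comm v u, dist_comm v w, dist_comm w u]
    linarith
  loopless := by constructor; intro v h; exact h.1 rfl

/-- Total weight of a walk in the essential graph: the sum of the distances between the
endpoints of its darts. -/
noncomputable def walkWeight {M : Type*} [MetricSpace M] {u v : M}
    (p : (essentialGraph M).Walk u v) : ℝ :=
  (p.darts.map fun d => dist d.toProd.1 d.toProd.2).sum

open SimpleGraph

namespace essentialGraph

variable {M : Type*} [MetricSpace M]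

@[simp] lemma walkWeight_nil {u : M} :
    walkWeight (Walk.nil : (essentialGraph M).Walk u u) = 0 := rfl

@[simp] lemma walkWeight_cons {u x v : M} (h : (essentialGraph M).Adj u x)
    (p : (essentialGraph M).Walk x v) :
    walkWeight (Walk.cons h p) = dist u x + walkWeight p := rfl

lemma walkWeight_append {u x v : M} (p : (essentialGraph M).Walk u x)
    (q : (essentialGraph M).Walk x v) :
    walkWeight (p.append q) = walkWeight p + walkWeight q := by
  simp [walkWeight, Walk.darts_append]

lemma dist_le_walkWeight {u v : M} (p : (essentialGraph M).Walk u v) :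
    dist u v ≤ walkWeight p := by
  induction p with
  | nil => simp
  | @cons a b c _ q ih =>
    rw [walkWeight_cons]
    linarith [dist_triangle a b c]

lemma exists_dist_add_dist_eq_of_not_adj {u v : M} (huv : u ≠ v)
    (h : ¬ (essentialGraph M).Adj u v) :
    ∃ w, w ≠ u ∧ w ≠ v ∧ dist u w + dist w v = dist u v := by
  simp only [essentialGraph, ne_eq, huv, not_false_eq_true, true_and, not_forall,
    not_lt] at h
  obtain ⟨w, hwu, hwv, hle⟩ := h
  exact ⟨w, hwu, hwv, le_antisymm hle (dist_triangle u w v)⟩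

lemma exists_walk_walkWeight_eq_dist [Finite M] (u v : M) :
    ∃ p : (essentialGraph M).Walk u v, walkWeight p = dist u v := by
  have hwf : WellFounded fun p q : M × M => dist p.1 p.2 < dist q.1 q.2 :=
    Finite.wellFounded_of_trans_of_irrefl _
  suffices ∀ q : M × M, ∃ p : (essentialGraph M).Walk q.1 q.2, walkWeight p = dist q.1 q.2 from
    this (u, v)
  intro q
  induction q using hwf.induction with
  | _ q ih =>
  obtain ⟨u, v⟩ := q
  by_cases huv : u = v
  · subst huv
    exact ⟨Walk.nil, by simp⟩
  by_cases hadj : (essentialGraph M).Adj u v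
  · exact ⟨Walk.cons hadj Walk.nil, by simp⟩
  obtain ⟨w, hwu, hwv, heq⟩ := exists_dist_add_dist_eq_of_not_adj huv hadj
  have huw : dist u w < dist u v := by linarith [dist_pos.2 hwv]
  have hwv' : dist w v < dist u v := by linarith [dist_pos.2 hwu.symm]
  obtain ⟨p₁, hp₁⟩ := ih (u, w) huw
  obtain ⟨p₂, hp₂⟩ := ih (w, v) hwv'
  exact ⟨p₁.append p₂, by rw [walkWeight_append, hp₁, hp₂, heq]⟩

lemma isLeast_walkWeight [Finite M] (u v : M) :
    IsLeast {c : ℝ | ∃ p : (essentialGraph M).Walk u v, walkWeight p = c} (dist u v) :=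
  ⟨exists_walk_walkWeight_eq_dist u v, by
    rintro c ⟨p, rfl⟩
    exact dist_le_walkWeight p⟩

end essentialGraph

/-- If the set of essential edges of a finite metric space `M` with `n` points has
exactly `n - 1` elements, and the essential edges connect `M`, then the essential edges
form a (spanning) tree, and the metric coincides with the shortest-weighted-path metric
of this tree: for all `u, v`, the distance `d(u,v)` is the least total weight of a walk
in the essential graph joining `u` to `v`. -/
theorem essential_edges_tree (M : Type*) [MetricSpace M] [Fintype M]
    (hconn : (essentialGraph M).Connected)
    (hcard : (essentialGraph M).edgeSet.ncard = Fintype.card M - 1) :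
    (essentialGraph M).IsTree ∧
    ∀ u v : M,
      IsLeast {c : ℝ | ∃ p : (essentialGraph M).Walk u v, walkWeight p = c}
        (dist u v) := by
  have hpos : 0 < Fintype.card M := Fintype.card_pos_iff.2 hconn.nonempty
  refine ⟨isTree_iff_connected_and_card.2 ⟨hconn, ?_⟩, essentialGraph.isLeast_walkWeight⟩
  rw [Nat.card_coe_set_eq, hcard, Nat.card_eq_fintype_card]
  omega
end

section
/- Let T = {a,b,c,d,e,f} with the metric: d(x,y) = 1 for distinct x,y in {a,b,c,d}, d(e,f) = 1, and d(x,y) = 1/2 whenever x is in {a,b,c,d} and y is in {e,f}. Then this d is a metric, and in the transportation cost space TC(T), the three measures f_1 = (1/2)(δ_a - δ_b + δ_c - δ_d), f_2 = (1/2)(δ_a + δ_b - δ_c - δ_d), f_3 = δ_e - δ_f span a subspace isometric to ell_infinity^3: ||θ_1 f_1 + θ_2 f_2 + θ_3 f_3||_TC = 1 for all signs θ_i = ±1. -/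
/-- The transportation cost norm of a zero-sum function `f` on a finite set `M` with
distance function `d`: the infimum of `∑ aᵢ d(xᵢ, yᵢ)` over all representations
`f = ∑ aᵢ (δ_{xᵢ} - δ_{yᵢ})` with `aᵢ ≥ 0`. -/
noncomputable def tcNorm {M : Type*} [Fintype M] [DecidableEq M]
    (d : M → M → ℝ) (f : M → ℝ) : ℝ :=
  sInf {c : ℝ | ∃ (m : ℕ) (a : Fin m → ℝ) (x y : Fin m → M),
    (∀ i, 0 ≤ a i) ∧
    (∀ p, f p = ∑ i, a i * ((if p = x i then (1 : ℝ) else 0) -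
      (if p = y i then 1 else 0))) ∧
    c = ∑ i, a i * d (x i) (y i)}

/-!
Each `θ₁f₁ + θ₂f₂` is `δᵤ - δᵥ` for two points `u, v ∈ {a,b,c,d}`, and `θ₃f₃` is `δ_w - δ_z`
with `{w, z} = {e, f}`. Moving `u → z` and `w → v` costs `1/2 + 1/2 = 1`. Conversely the
1-Lipschitz potential `d(·, z)` pairs to `d(u,z) - d(v,z) + d(w,z) = 1/2 - 1/2 + 1 = 1` with
this measure, so by weak duality no transport plan is cheaper.
-/

section TransportCost

variable {M : Type*} [Fintype M] [DecidableEq M] {d : M → M → ℝ}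

/-- Weak duality for the transportation cost. -/
theorem dotProduct_le_cost_of_represents {f g : M → ℝ} {m : ℕ} {a : Fin m → ℝ}
    {x y : Fin m → M} (ha : ∀ i, 0 ≤ a i)
    (hf : f = ∑ i, a i • (Pi.single (x i) 1 - Pi.single (y i) 1))
    (hg : ∀ p q, g p - g q ≤ d p q) :
    g ⬝ᵥ f ≤ ∑ i, a i * d (x i) (y i) := by
  rw [hf, dotProduct_sum]
  refine Finset.sum_le_sum fun i _ => ?_
  rw [dotProduct_smul, dotProduct_sub, dotProduct_single_one, dotProduct_single_one, smul_eq_mul]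
  exact mul_le_mul_of_nonneg_left (hg _ _) (ha i)

theorem tcNorm_eq_of_represents_of_lipschitz {f g : M → ℝ} {m : ℕ} {a : Fin m → ℝ}
    {x y : Fin m → M} (ha : ∀ i, 0 ≤ a i)
    (hf : f = ∑ i, a i • (Pi.single (x i) 1 - Pi.single (y i) 1))
    (hg : ∀ p q, g p - g q ≤ d p q) (hcost : g ⬝ᵥ f = ∑ i, a i * d (x i) (y i)) :
    tcNorm d f = ∑ i, a i * d (x i) (y i) := by
  have represents_iff : ∀ {m} {a : Fin m → ℝ} {x y : Fin m → M},
      (∀ p, f p = ∑ i, a i * ((if p = x i then (1 : ℝ) else 0) - (if p = y i then 1 else 0))) ↔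
        f = ∑ i, a i • (Pi.single (x i) 1 - Pi.single (y i) 1) := by
    simp [funext_iff, Finset.sum_apply, Pi.single_apply]
  refine IsLeast.csInf_eq ⟨⟨m, a, x, y, ha, represents_iff.2 hf, rfl⟩, ?_⟩
  rintro c ⟨m', a', x', y', ha', hf', rfl⟩
  exact hcost ▸ dotProduct_le_cost_of_represents ha' (represents_iff.1 hf') hg

/-- The plan `u → z`, `w → v` is optimal, as certified by the potential `d(·, z)`. -/
theorem tcNorm_two_moves_of_geodesic (hdiag : ∀ p, d p p = 0)
    (htri : ∀ p q r, d p r ≤ d p q + d q r) {u v w z : M} (hv : d w z = d w v + d v z) :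
    tcNorm d (Pi.single u 1 - Pi.single v 1 + (Pi.single w 1 - Pi.single z 1)) =
      d u z + d w v := by
  have hplan : d u z + d w v = ∑ i, ![1, 1] i * d (![u, w] i) (![z, v] i) := by simp
  rw [hplan]
  refine tcNorm_eq_of_represents_of_lipschitz (g := (d · z)) (by simp [Fin.forall_fin_two]) ?_
    (fun p q => by linarith [htri p q z]) ?_
  · simp [Fin.sum_univ_two]
    abel
  · simp [dotProduct_add, dotProduct_sub, hdiag, hv]

end TransportCost

theorem triangle_of_offDiag_mem_Icc {X : Type*} {d : X → X → ℝ} (hdiag : ∀ x, d x x = 0)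
    (hoff : ∀ x y, x ≠ y → d x y ∈ Set.Icc (1 / 2) 1) (x y z : X) :
    d x z ≤ d x y + d y z := by
  have hnonneg : ∀ p q, 0 ≤ d p q := fun p q => by
    rcases eq_or_ne p q with rfl | h
    · exact (hdiag p).ge
    · linarith [(hoff p q h).1]
  rcases eq_or_ne x y with rfl | hxy
  · rw [hdiag, zero_add]
  rcases eq_or_ne y z with rfl | hyz
  · rw [hdiag, add_zero]
  rcases eq_or_ne x z with rfl | hxz
  · rw [hdiag]; exact add_nonneg (hnonneg _ _) (hnonneg _ _)
  linarith [(hoff x y hxy).1, (hoff y z hyz).1, (hoff x z hxz).2]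

noncomputable def sixPointDist (x y : Fin 6) : ℝ :=
  if x = y then 0 else if ((x : ℕ) < 4 ↔ (y : ℕ) < 4) then 1 else 1 / 2

namespace sixPointDist

theorem self (x : Fin 6) : sixPointDist x x = 0 := if_pos rfl

theorem comm (x y : Fin 6) : sixPointDist x y = sixPointDist y x := by
  simp only [sixPointDist, eq_comm, iff_comm]

theorem mem_Icc_of_ne {x y : Fin 6} (h : x ≠ y) : sixPointDist x y ∈ Set.Icc (1 / 2) 1 := by
  rw [sixPointDist, if_neg h]
  split_ifs <;> norm_num

theorem of_lt_of_le {x y : Fin 6} (hx : (x : ℕ) < 4) (hy : 4 ≤ (y : ℕ)) :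
    sixPointDist x y = 1 / 2 := by
  have : x ≠ y := by rintro rfl; omega
  simp [sixPointDist, this, hx, hy.not_gt]

theorem of_le_of_le {x y : Fin 6} (hx : 4 ≤ (x : ℕ)) (hy : 4 ≤ (y : ℕ)) (h : x ≠ y) :
    sixPointDist x y = 1 := by
  simp [sixPointDist, h, hx.not_gt, hy.not_gt]

theorem tcNorm_two_moves {u v w z : Fin 6} (hu : (u : ℕ) < 4) (hv : (v : ℕ) < 4)
    (hw : 4 ≤ (w : ℕ)) (hz : 4 ≤ (z : ℕ)) (hwz : w ≠ z) :
    tcNorm sixPointDist (Pi.single u 1 - Pi.single v 1 + (Pi.single w 1 - Pi.single z 1)) = 1 := by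
  have hwv : sixPointDist w v = 1 / 2 := (comm _ _).trans (of_lt_of_le hv hw)
  have htri := triangle_of_offDiag_mem_Icc self fun _ _ => mem_Icc_of_ne
  rw [tcNorm_two_moves_of_geodesic self htri, of_lt_of_le hu hz, hwv]
  · norm_num
  · rw [of_le_of_le hw hz hwz, hwv, of_lt_of_le hv hz]
    norm_num

end sixPointDist

theorem exists_clique_move {θ₁ θ₂ : ℝ} (h₁ : θ₁ = 1 ∨ θ₁ = -1) (h₂ : θ₂ = 1 ∨ θ₂ = -1) :
    ∃ u v : Fin 6, (u : ℕ) < 4 ∧ (v : ℕ) < 4 ∧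
      θ₁ • (![1 / 2, -(1 / 2), 1 / 2, -(1 / 2), 0, 0] : Fin 6 → ℝ) +
        θ₂ • ![1 / 2, 1 / 2, -(1 / 2), -(1 / 2), 0, 0] = Pi.single u 1 - Pi.single v 1 := by
  rcases h₁ with rfl | rfl <;> rcases h₂ with rfl | rfl
  on_goal 1 => refine ⟨0, 3, ?_⟩
  on_goal 2 => refine ⟨2, 1, ?_⟩
  on_goal 3 => refine ⟨1, 2, ?_⟩
  on_goal 4 => refine ⟨3, 0, ?_⟩
  all_goals
    refine ⟨by decide, by decide, ?_⟩
    ext p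
    fin_cases p <;> norm_num [Pi.single_apply, Fin.ext_iff]

theorem exists_pair_move {θ : ℝ} (h : θ = 1 ∨ θ = -1) :
    ∃ w z : Fin 6, 4 ≤ (w : ℕ) ∧ 4 ≤ (z : ℕ) ∧ w ≠ z ∧
      θ • (![0, 0, 0, 0, 1, -1] : Fin 6 → ℝ) = Pi.single w 1 - Pi.single z 1 := by
  rcases h with rfl | rfl
  on_goal 1 => refine ⟨4, 5, ?_⟩
  on_goal 2 => refine ⟨5, 4, ?_⟩
  all_goals
    refine ⟨by decide, by decide, by decide, ?_⟩
    ext p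
    fin_cases p <;> norm_num [Pi.single_apply, Fin.ext_iff]

/-- Let `T = {a,b,c,d,e,f}` (identified with `Fin 6`, `a,b,c,d = 0,1,2,3`,
`e,f = 4,5`) with `d(x,y) = 1` for distinct `x,y ∈ {a,b,c,d}`, `d(e,f) = 1`, and
`d = 1/2` between the two groups. Then `d` is a metric, and the three transportation
problems `f₁ = (1/2)(δ_a - δ_b + δ_c - δ_d)`, `f₂ = (1/2)(δ_a + δ_b - δ_c - δ_d)`,
`f₃ = δ_e - δ_f` span a subspace of `TC(T)` isometric to `ℓ∞³`:
`‖θ₁f₁ + θ₂f₂ + θ₃f₃‖_TC = 1` for all signs `θᵢ = ±1`. -/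
theorem tc_contains_linfty3 (d : Fin 6 → Fin 6 → ℝ)
    (hd : d = fun (x y : Fin 6) => if x = y then 0
      else if ((x : ℕ) < 4 ↔ (y : ℕ) < 4) then 1 else 1 / 2)
    (f₁ f₂ f₃ : Fin 6 → ℝ)
    (hf₁ : f₁ = ![1 / 2, -(1 / 2), 1 / 2, -(1 / 2), 0, 0])
    (hf₂ : f₂ = ![1 / 2, 1 / 2, -(1 / 2), -(1 / 2), 0, 0])
    (hf₃ : f₃ = ![0, 0, 0, 0, 1, -1]) :
    ((∀ x y, d x y = 0 ↔ x = y) ∧ (∀ x y, d x y = d y x) ∧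
      (∀ x y z, d x z ≤ d x y + d y z)) ∧
    (∀ θ₁ θ₂ θ₃ : ℝ, (θ₁ = 1 ∨ θ₁ = -1) → (θ₂ = 1 ∨ θ₂ = -1) → (θ₃ = 1 ∨ θ₃ = -1) →
      tcNorm d (fun p => θ₁ * f₁ p + θ₂ * f₂ p + θ₃ * f₃ p) = 1) := by
  obtain rfl : d = sixPointDist := hd
  subst hf₁ hf₂ hf₃
  refine ⟨⟨fun x y => ⟨fun h => ?_, fun h => h ▸ sixPointDist.self x⟩, sixPointDist.comm,
    triangle_of_offDiag_mem_Icc sixPointDist.self fun _ _ => sixPointDist.mem_Icc_of_ne⟩, ?_⟩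
  · by_contra hxy
    linarith [(sixPointDist.mem_Icc_of_ne hxy).1]
  intro θ₁ θ₂ θ₃ h₁ h₂ h₃
  obtain ⟨u, v, hu, hv, huv⟩ := exists_clique_move h₁ h₂
  obtain ⟨w, z, hw, hz, hwz, hwz'⟩ := exists_pair_move h₃
  convert sixPointDist.tcNorm_two_moves hu hv hw hz hwz using 2
  rw [← huv, ← hwz']
  rfl
end

section
/- Let F = {a,b,c,d,e,f,g,h} with metric: d = 1 between distinct points within {a,b,c,d}, d = 1 between distinct points within {e,f,g,h}, and d = 1/2 between any point of {a,b,c,d} and any point of {e,f,g,h}. Then d is a metric, and in TC(F) the four measures f_1 = (1/2)(δ_a - δ_b + δ_c - δ_d), f_2 = (1/2)(δ_a + δ_b - δ_c - δ_d), f_3 = (1/2)(δ_e - δ_f + δ_g - δ_h), f_4 = (1/2)(δ_e + δ_f - δ_g - δ_h) span a subspace isometric to ell_infinity^4: ||sum θ_i f_i||_TC = 1 for all signs θ_i = ±1. -/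
/-! Every combination `∑ θᵢ fᵢ` with signs `θᵢ = ±1` is `δ_p - δ_m + δ_p' - δ_m'` with `p ≠ m`
in the block `{a,b,c,d}` and `p' ≠ m'` in the block `{e,f,g,h}`. Transporting `p` to `m'` and
`p'` to `m` across the blocks costs `1/2 + 1/2 = 1`. Conversely the potential equal to `1/4` at
`p, p'` and to `-1/4` elsewhere is `1`-Lipschitz, since distinct points are at distance at least
`1/2`, and its pairing with the measure is `1`; by weak duality no plan is cheaper. The metric
axioms hold because all nonzero distances lie in `[1/2, 1]`. -/

open Finset

section Metric

variable {M : Type*} {d : M → M → ℝ}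

theorem triangle_of_half_le_of_le_one (h0 : ∀ x, 0 ≤ d x x)
    (hsep : ∀ x y, x ≠ y → 1 / 2 ≤ d x y) (hle : ∀ x y, d x y ≤ 1) (x y z : M) :
    d x z ≤ d x y + d y z := by
  by_cases hxy : x = y
  · subst hxy; linarith [h0 x]
  by_cases hyz : y = z
  · subst hyz; linarith [h0 y]
  linarith [hle x z, hsep x y hxy, hsep y z hyz]

theorem sub_le_of_abs_le {u : M → ℝ} {r : ℝ} (h0 : ∀ x, 0 ≤ d x x)
    (hsep : ∀ x y, x ≠ y → 2 * r ≤ d x y) (hu : ∀ x, |u x| ≤ r) (x y : M) :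
    u x - u y ≤ d x y := by
  by_cases hxy : x = y
  · subst hxy; simpa using h0 x
  linarith [hsep x y hxy, (abs_le.mp (hu x)).2, (abs_le.mp (hu y)).1]

end Metric

section Transport

variable {M : Type*} [DecidableEq M] {d : M → M → ℝ}

def tcCosts (d : M → M → ℝ) (f : M → ℝ) : Set ℝ :=
  {c : ℝ | ∃ (m : ℕ) (a : Fin m → ℝ) (x y : Fin m → M),
    (∀ i, 0 ≤ a i) ∧
    (∀ p, f p = ∑ i, a i * ((if p = x i then (1 : ℝ) else 0) -
      (if p = y i then 1 else 0))) ∧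
    c = ∑ i, a i * d (x i) (y i)}

theorem add_mem_tcCosts (x₀ y₀ x₁ y₁ : M) :
    d x₀ y₀ + d x₁ y₁ ∈ tcCosts d
      ((Pi.single x₀ 1 - Pi.single y₀ 1 : M → ℝ) + (Pi.single x₁ 1 - Pi.single y₁ 1)) := by
  refine ⟨2, ![1, 1], ![x₀, x₁], ![y₀, y₁], fun i => ?_, fun p => ?_, ?_⟩
  · fin_cases i <;> simp
  · simp [Fin.sum_univ_two, Pi.single_apply]
    -- the two sides differ only in their `Decidable (p = ![x₀, x₁] 0)` instances
    rfl
  · simp [Fin.sum_univ_two]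

variable [Fintype M]

theorem tcNorm_eq_sInf_tcCosts (d : M → M → ℝ) (f : M → ℝ) :
    tcNorm d f = sInf (tcCosts d f) := rfl

theorem sum_pi_single_one_mul (x : M) (u : M → ℝ) :
    ∑ p, (Pi.single x 1 : M → ℝ) p * u p = u x := by
  simp [Pi.single_apply]

theorem sum_mul_le_of_mem_tcCosts {f u : M → ℝ} {c : ℝ} (hu : ∀ x y, u x - u y ≤ d x y)
    (hc : c ∈ tcCosts d f) : ∑ p, f p * u p ≤ c := by
  obtain ⟨m, a, x, y, ha, hf, rfl⟩ := hc
  have hpair : ∑ p, f p * u p = ∑ i, a i * (u (x i) - u (y i)) := by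
    simp_rw [hf, Finset.sum_mul]
    rw [Finset.sum_comm]
    refine Finset.sum_congr rfl fun i _ => ?_
    simp [mul_assoc, ← Finset.mul_sum, sub_mul, Finset.sum_sub_distrib]
  rw [hpair]
  exact Finset.sum_le_sum fun i _ => mul_le_mul_of_nonneg_left (hu _ _) (ha i)

theorem tcNorm_eq_of_mem_tcCosts {f u : M → ℝ} {c : ℝ} (hu : ∀ x y, u x - u y ≤ d x y)
    (hc : c ∈ tcCosts d f) (hpair : ∑ p, f p * u p = c) : tcNorm d f = c := by
  have hlb : ∀ c' ∈ tcCosts d f, c ≤ c' := fun c' hc' =>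
    hpair ▸ sum_mul_le_of_mem_tcCosts hu hc'
  rw [tcNorm_eq_sInf_tcCosts]
  exact le_antisymm (csInf_le ⟨c, hlb⟩ hc) (le_csInf ⟨c, hc⟩ hlb)

theorem tcNorm_two_dipoles_eq_one (h0 : ∀ x, 0 ≤ d x x)
    (hsep : ∀ x y, x ≠ y → 1 / 2 ≤ d x y) {p m p' m' : M}
    (hpm : p ≠ m) (hpm' : p ≠ m') (hp'm : p' ≠ m) (hp'm' : p' ≠ m')
    (hpm'_dist : d p m' = 1 / 2) (hp'm_dist : d p' m = 1 / 2) :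
    tcNorm d ((Pi.single p 1 - Pi.single m 1 : M → ℝ) + (Pi.single p' 1 - Pi.single m' 1)) =
      1 := by
  set u : M → ℝ := fun x => if x = p ∨ x = p' then 1 / 4 else -(1 / 4)
  have hu : ∀ x, |u x| ≤ 1 / 4 := fun x => by
    simp only [u]; split_ifs <;> norm_num
  have hplan : (1 : ℝ) ∈ tcCosts d
      ((Pi.single p 1 - Pi.single m 1 : M → ℝ) + (Pi.single p' 1 - Pi.single m' 1)) := by
    convert add_mem_tcCosts p m' p' m using 2
    · abel
    · rw [hpm'_dist, hp'm_dist]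
      norm_num
  refine tcNorm_eq_of_mem_tcCosts
    (sub_le_of_abs_le h0 (fun x y hxy => by linarith [hsep x y hxy]) hu) hplan ?_
  simp only [Pi.add_apply, Pi.sub_apply, add_mul, sub_mul, sum_add_distrib, sum_sub_distrib,
    sum_pi_single_one_mul]
  norm_num [u, hpm'.symm, hp'm.symm, hp'm'.symm, hpm.symm]

end Transport

section TwoBlocks

noncomputable def twoBlockDist (x y : Fin 8) : ℝ :=
  if x = y then 0 else if ((x : ℕ) < 4 ↔ (y : ℕ) < 4) then 1 else 1 / 2

theorem twoBlockDist_self (x : Fin 8) : twoBlockDist x x = 0 := by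
  simp [twoBlockDist]

theorem twoBlockDist_eq_zero_iff (x y : Fin 8) : twoBlockDist x y = 0 ↔ x = y := by
  unfold twoBlockDist
  split_ifs <;> norm_num [*]

theorem twoBlockDist_comm (x y : Fin 8) : twoBlockDist x y = twoBlockDist y x := by
  unfold twoBlockDist
  split_ifs <;> simp_all [eq_comm]

theorem half_le_twoBlockDist {x y : Fin 8} (h : x ≠ y) : 1 / 2 ≤ twoBlockDist x y := by
  rw [twoBlockDist, if_neg h]
  split_ifs <;> norm_num

theorem twoBlockDist_le_one (x y : Fin 8) : twoBlockDist x y ≤ 1 := by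
  unfold twoBlockDist
  split_ifs <;> norm_num

theorem twoBlockDist_eq_half {x y : Fin 8} (h : ¬((x : ℕ) < 4 ↔ (y : ℕ) < 4)) :
    twoBlockDist x y = 1 / 2 := by
  have hxy : x ≠ y := by rintro rfl; exact h Iff.rfl
  simp [twoBlockDist, hxy, h]

theorem first_block_eq_single_sub_single {θ₁ θ₂ : ℝ} (h₁ : θ₁ = 1 ∨ θ₁ = -1)
    (h₂ : θ₂ = 1 ∨ θ₂ = -1) :
    ∃ p m : Fin 8, (p : ℕ) < 4 ∧ (m : ℕ) < 4 ∧ p ≠ m ∧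
      θ₁ • (![1 / 2, -(1 / 2), 1 / 2, -(1 / 2), 0, 0, 0, 0] : Fin 8 → ℝ) +
        θ₂ • ![1 / 2, 1 / 2, -(1 / 2), -(1 / 2), 0, 0, 0, 0] = Pi.single p 1 - Pi.single m 1 := by
  rcases h₁ with rfl | rfl <;> rcases h₂ with rfl | rfl
  · refine ⟨0, 3, by decide, by decide, by decide, ?_⟩
    ext i; fin_cases i <;> norm_num [Pi.single_apply, Fin.ext_iff]
  · refine ⟨2, 1, by decide, by decide, by decide, ?_⟩
    ext i; fin_cases i <;> norm_num [Pi.single_apply, Fin.ext_iff]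
  · refine ⟨1, 2, by decide, by decide, by decide, ?_⟩
    ext i; fin_cases i <;> norm_num [Pi.single_apply, Fin.ext_iff]
  · refine ⟨3, 0, by decide, by decide, by decide, ?_⟩
    ext i; fin_cases i <;> norm_num [Pi.single_apply, Fin.ext_iff]

theorem second_block_eq_single_sub_single {θ₃ θ₄ : ℝ} (h₃ : θ₃ = 1 ∨ θ₃ = -1)
    (h₄ : θ₄ = 1 ∨ θ₄ = -1) :
    ∃ p m : Fin 8, 4 ≤ (p : ℕ) ∧ 4 ≤ (m : ℕ) ∧ p ≠ m ∧
      θ₃ • (![0, 0, 0, 0, 1 / 2, -(1 / 2), 1 / 2, -(1 / 2)] : Fin 8 → ℝ) +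
        θ₄ • ![0, 0, 0, 0, 1 / 2, 1 / 2, -(1 / 2), -(1 / 2)] = Pi.single p 1 - Pi.single m 1 := by
  rcases h₃ with rfl | rfl <;> rcases h₄ with rfl | rfl
  · refine ⟨4, 7, by decide, by decide, by decide, ?_⟩
    ext i; fin_cases i <;> norm_num [Pi.single_apply, Fin.ext_iff]
  · refine ⟨6, 5, by decide, by decide, by decide, ?_⟩
    ext i; fin_cases i <;> norm_num [Pi.single_apply, Fin.ext_iff]
  · refine ⟨5, 6, by decide, by decide, by decide, ?_⟩
    ext i; fin_cases i <;> norm_num [Pi.single_apply, Fin.ext_iff]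
  · refine ⟨7, 4, by decide, by decide, by decide, ?_⟩
    ext i; fin_cases i <;> norm_num [Pi.single_apply, Fin.ext_iff]

end TwoBlocks

/-- Let `F = {a,b,c,d,e,f,g,h}` (identified with `Fin 8`, `a,b,c,d = 0,1,2,3`,
`e,f,g,h = 4,5,6,7`) with `d = 1` between distinct points of the same group and
`d = 1/2` between the two groups. Then `d` is a metric, and the four transportation
problems `f₁ = (1/2)(δ_a - δ_b + δ_c - δ_d)`, `f₂ = (1/2)(δ_a + δ_b - δ_c - δ_d)`,
`f₃ = (1/2)(δ_e - δ_f + δ_g - δ_h)`, `f₄ = (1/2)(δ_e + δ_f - δ_g - δ_h)` span a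
subspace of `TC(F)` isometric to `ℓ∞⁴`: `‖∑ θᵢ fᵢ‖_TC = 1` for all signs `θᵢ = ±1`. -/
theorem tc_contains_linfty4 (d : Fin 8 → Fin 8 → ℝ)
    (hd : d = fun (x y : Fin 8) => if x = y then 0
      else if ((x : ℕ) < 4 ↔ (y : ℕ) < 4) then 1 else 1 / 2)
    (f₁ f₂ f₃ f₄ : Fin 8 → ℝ)
    (hf₁ : f₁ = ![1 / 2, -(1 / 2), 1 / 2, -(1 / 2), 0, 0, 0, 0])
    (hf₂ : f₂ = ![1 / 2, 1 / 2, -(1 / 2), -(1 / 2), 0, 0, 0, 0])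
    (hf₃ : f₃ = ![0, 0, 0, 0, 1 / 2, -(1 / 2), 1 / 2, -(1 / 2)])
    (hf₄ : f₄ = ![0, 0, 0, 0, 1 / 2, 1 / 2, -(1 / 2), -(1 / 2)]) :
    ((∀ x y, d x y = 0 ↔ x = y) ∧ (∀ x y, d x y = d y x) ∧
      (∀ x y z, d x z ≤ d x y + d y z)) ∧
    (∀ θ₁ θ₂ θ₃ θ₄ : ℝ, (θ₁ = 1 ∨ θ₁ = -1) → (θ₂ = 1 ∨ θ₂ = -1) →
      (θ₃ = 1 ∨ θ₃ = -1) → (θ₄ = 1 ∨ θ₄ = -1) →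
      tcNorm d (fun p => θ₁ * f₁ p + θ₂ * f₂ p + θ₃ * f₃ p + θ₄ * f₄ p) = 1) := by
  obtain rfl : d = twoBlockDist := hd
  have h0 (x : Fin 8) : 0 ≤ twoBlockDist x x := (twoBlockDist_self x).ge
  refine ⟨⟨twoBlockDist_eq_zero_iff, twoBlockDist_comm,
    triangle_of_half_le_of_le_one h0 (fun _ _ => half_le_twoBlockDist) twoBlockDist_le_one⟩, ?_⟩
  intro θ₁ θ₂ θ₃ θ₄ h₁ h₂ h₃ h₄
  obtain ⟨p, m, hp, hm, hpm, h₁₂⟩ := first_block_eq_single_sub_single h₁ h₂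
  obtain ⟨p', m', hp', hm', hp'm', h₃₄⟩ := second_block_eq_single_sub_single h₃ h₄
  have hsplit : (fun x => θ₁ * f₁ x + θ₂ * f₂ x + θ₃ * f₃ x + θ₄ * f₄ x) =
      (θ₁ • f₁ + θ₂ • f₂) + (θ₃ • f₃ + θ₄ • f₄) := by
    funext x
    simp only [Pi.add_apply, Pi.smul_apply, smul_eq_mul, add_assoc]
  rw [hsplit, hf₁, hf₂, hf₃, hf₄, h₁₂, h₃₄]
  exact tcNorm_two_dipoles_eq_one h0 (fun _ _ => half_le_twoBlockDist) hpm
    (Fin.ne_of_val_ne (by omega)) (Fin.ne_of_val_ne (by omega)) hp'm'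
    (twoBlockDist_eq_half (by omega)) (twoBlockDist_eq_half (by omega))
end
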